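/- For any intersecting pair of rectangles (r,s), exactly one of the following holds in any fixed tile T containing their reference point: (class(r,T), class(s,T)) is one of the 9 non-shaded combinations {(A,A),(A,B),(A,C),(A,D),(B,A),(B,C),(C,A),(C,B),(D,A)}; in particular (class(r,T), class(s,T)) can never be (B,B), (B,D), (C,C), (C,D), (D,B), (D,C), or (D,D). -/
import Mathlib


structure Rect where
  xl : ℝ
  xu : ℝ
  yl : ℝ
  yu : ℝ

inductive Cls
  | A | B | C | D
deriving DecidableEq

/-- The class of a rectangle q with respect to tile T. -/
noncomputable def cls (T q : Rect) : Cls :=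
  if T.xl ≤ q.xl then (if T.yl ≤ q.yl then .A else .B)
  else (if T.yl ≤ q.yl then .C else .D)

/-- For any intersecting pair (r,s) and the (half-open) tile T containing their
reference point, the class pair (cls(r,T), cls(s,T)) is one of the 9 non-shaded
combinations and never one of the 7 shaded ones. -/
theorem stmt17 (T r s : Rect)
    (hrv : r.xl ≤ r.xu ∧ r.yl ≤ r.yu) (hsv : s.xl ≤ s.xu ∧ s.yl ≤ s.yu)
    -- r intersects s
    (hrs : r.xl ≤ s.xu ∧ s.xl ≤ r.xu ∧ r.yl ≤ s.yu ∧ s.yl ≤ r.yu)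
    -- the reference point lies in the half-open tile T
    (href : T.xl ≤ max r.xl s.xl ∧ max r.xl s.xl < T.xu ∧
            T.yl ≤ max r.yl s.yl ∧ max r.yl s.yl < T.yu) :
    (cls T r, cls T s) ∈
      ([(.A,.A),(.A,.B),(.A,.C),(.A,.D),(.B,.A),(.B,.C),(.C,.A),(.C,.B),(.D,.A)] :
        List (Cls × Cls)) ∧
    (cls T r, cls T s) ∉
      ([(.B,.B),(.B,.D),(.C,.C),(.C,.D),(.D,.B),(.D,.C),(.D,.D)] :
        List (Cls × Cls)) := by
  obtain ⟨hx1, -, hy1, -⟩ := href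
  have hx := le_max_iff.mp hx1
  have hy := le_max_iff.mp hy1
  unfold cls
  split_ifs <;> simp_all <;> linarith
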